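/- arXiv:2510.09614 — 4 statements merged into one kernel-verified Lean document; each statement's English description precedes it below -/
import Mathlib

section
/- Let H be a complex Hilbert space, let T be a bounded linear operator on H that is hyponormal, and let s ∈ ℂ. Then for every h ∈ H, ‖T*((conj s)·T* + T) h‖ · ‖h‖ ≥ (1 − |s|) · ‖T h‖². -/
open ContinuousLinearMap

section

variable {𝕜 E : Type*} [RCLike 𝕜] [NormedAddCommGroup E] [InnerProductSpace 𝕜 E]

theorem one_sub_norm_mul_sq_le_re_mul_inner_add_sq {x y : E} (hxy : ‖x‖ ≤ ‖y‖) (s : 𝕜) :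
    (1 - ‖s‖) * ‖y‖ ^ 2 ≤ RCLike.re (s * inner 𝕜 x y + (‖y‖ : 𝕜) ^ 2) := by
  have hcross : ‖s * inner 𝕜 x y‖ ≤ ‖s‖ * ‖y‖ ^ 2 := by
    rw [norm_mul, sq]
    gcongr
    exact (norm_inner_le_norm x y).trans (by gcongr)
  rw [map_add, ← RCLike.ofReal_pow, RCLike.ofReal_re]
  linarith [neg_le_of_abs_le (RCLike.abs_re_le_norm (s * inner 𝕜 x y))]

theorem inner_adjoint_conj_smul_adjoint_add_apply [CompleteSpace E] (T : E →L[𝕜] E) (s : 𝕜)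
    (h : E) :
    inner 𝕜 (adjoint T ((starRingEnd 𝕜 s • adjoint T + T) h)) h =
      s * inner 𝕜 (adjoint T h) (T h) + (‖T h‖ : 𝕜) ^ 2 := by
  rw [adjoint_inner_left, add_apply, smul_apply, inner_add_left, inner_smul_left,
    RCLike.conj_conj, inner_self_eq_norm_sq_to_K]

end

/-- Key estimate: for a hyponormal operator `T` and `s ∈ ℂ`,
`‖T*((s̄T* + T)h)‖ · ‖h‖ ≥ (1 − |s|) · ‖Th‖²` for all `h`. -/
theorem norm_adjoint_conj_smul_adjoint_add_apply_mul_norm_ge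
    {H : Type*} [NormedAddCommGroup H] [InnerProductSpace ℂ H] [CompleteSpace H]
    (T : H →L[ℂ] H) (hT : ∀ h : H, ‖adjoint T h‖ ≤ ‖T h‖) (s : ℂ) :
    ∀ h : H,
      ‖adjoint T ((((starRingEnd ℂ) s) • adjoint T + T) h)‖ * ‖h‖ ≥
        (1 - ‖s‖) * ‖T h‖ ^ 2 := by
  intro h
  calc (1 - ‖s‖) * ‖T h‖ ^ 2
      ≤ RCLike.re (s * inner ℂ (adjoint T h) (T h) + (‖T h‖ : ℂ) ^ 2) :=
        one_sub_norm_mul_sq_le_re_mul_inner_add_sq (hT h) s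
    _ = RCLike.re (inner ℂ (adjoint T ((starRingEnd ℂ s • adjoint T + T) h)) h) :=
        congrArg RCLike.re (inner_adjoint_conj_smul_adjoint_add_apply T s h).symm
    _ ≤ ‖adjoint T ((starRingEnd ℂ s • adjoint T + T) h)‖ * ‖h‖ := re_inner_le_norm _ _
end

section
/- Let H be a complex Hilbert space, let T be a bounded linear operator on H that is hyponormal, and let s ∈ ℂ with |s| > 1. Then T is bounded below if and only if the operator sT + T* is bounded below. -/
/-!
Hyponormality makes `T*` pointwise dominated by `T`, so by the triangle inequality
`(‖s‖ - 1) ‖T h‖ ≤ ‖(s T + T*) h‖ ≤ (‖s‖ + 1) ‖T h‖`. Since `‖s‖ - 1 > 0`, the two operators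
are pointwise comparable in norm, and being bounded below passes between them.
-/

open ContinuousLinearMap

section BoundedBelow

variable {E F G : Type*} [SeminormedAddCommGroup E] [SeminormedAddCommGroup F]
  [SeminormedAddCommGroup G]

def IsBoundedBelow (f : E → F) : Prop :=
  ∃ c > 0, ∀ x, c * ‖x‖ ≤ ‖f x‖

theorem IsBoundedBelow.of_mul_norm_le {f : E → F} {g : E → G} (hf : IsBoundedBelow f) {a : ℝ}
    (ha : 0 < a) (hfg : ∀ x, a * ‖f x‖ ≤ ‖g x‖) : IsBoundedBelow g := by
  obtain ⟨c, hc, hfc⟩ := hf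
  refine ⟨a * c, mul_pos ha hc, fun x => ?_⟩
  calc a * c * ‖x‖ = a * (c * ‖x‖) := mul_assoc _ _ _
    _ ≤ a * ‖f x‖ := mul_le_mul_of_nonneg_left (hfc x) ha.le
    _ ≤ ‖g x‖ := hfg x

end BoundedBelow

section SmulAdd

variable {𝕜 E F : Type*} [NormedField 𝕜] [SeminormedAddCommGroup E] [SeminormedAddCommGroup F]
  [NormedSpace 𝕜 E] [NormedSpace 𝕜 F] {T S : E →L[𝕜] F} {x : E}

theorem norm_smul_add_apply_le (s : 𝕜) (hST : ‖S x‖ ≤ ‖T x‖) :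
    ‖(s • T + S) x‖ ≤ (‖s‖ + 1) * ‖T x‖ :=
  calc ‖(s • T + S) x‖ = ‖s • T x + S x‖ := rfl
    _ ≤ ‖s • T x‖ + ‖S x‖ := norm_add_le _ _
    _ ≤ ‖s‖ * ‖T x‖ + ‖T x‖ := by rw [norm_smul]; gcongr
    _ = (‖s‖ + 1) * ‖T x‖ := by ring

theorem sub_one_mul_norm_le_norm_smul_add_apply (s : 𝕜) (hST : ‖S x‖ ≤ ‖T x‖) :
    (‖s‖ - 1) * ‖T x‖ ≤ ‖(s • T + S) x‖ := by
  have h : ‖s • T x‖ ≤ ‖s • T x + S x‖ + ‖S x‖ := by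
    simpa using norm_sub_le (s • T x + S x) (S x)
  rw [norm_smul] at h
  change _ ≤ ‖s • T x + S x‖
  linarith

end SmulAdd

/-- Theorem (Javed–Maji): Let `T` be hyponormal on a complex Hilbert space and
`s ∈ ℂ` with `|s| > 1`. Then `T` is bounded below iff `s • T + T*` is bounded below. -/
theorem boundedBelow_iff_smul_add_adjoint_boundedBelow_of_one_lt_abs
    {H : Type*} [NormedAddCommGroup H] [InnerProductSpace ℂ H] [CompleteSpace H]
    (T : H →L[ℂ] H) (hT : ∀ h : H, ‖adjoint T h‖ ≤ ‖T h‖)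
    (s : ℂ) (hs : 1 < ‖s‖) :
    (∃ c > 0, ∀ h : H, c * ‖h‖ ≤ ‖T h‖) ↔
      (∃ c > 0, ∀ h : H, c * ‖h‖ ≤ ‖(s • T + adjoint T) h‖) := by
  change IsBoundedBelow T ↔ IsBoundedBelow (s • T + adjoint T)
  constructor
  · intro hTb
    exact hTb.of_mul_norm_le (sub_pos.mpr hs)
      fun h => sub_one_mul_norm_le_norm_smul_add_apply s (hT h)
  · intro hSb
    refine hSb.of_mul_norm_le (inv_pos.mpr (by positivity : (0 : ℝ) < ‖s‖ + 1)) fun h => ?_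
    rw [inv_mul_le_iff₀ (by positivity)]
    exact norm_smul_add_apply_le s (hT h)
end

section
/- Let H be a complex Hilbert space, let T be a bounded linear operator on H that is hyponormal, and let s ∈ ℂ with |s| ≠ 1. Then T is invertible (has a bounded linear inverse) if and only if sT + T* is invertible. -/
/-!
For invertible hyponormal `T`, the operator `V = T* T⁻¹` is a contraction. If `|s| > 1` then
`s T + T* = (s + V) T`, and if `|s| < 1` then `s T + T* = T* (1 + s V*)`; in both cases the
factors are invertible by the Neumann series.

Conversely, for `A = s T + T*` one has `‖A x‖² - ‖A* x‖² = (|s|² - 1) (‖T x‖² - ‖T* x‖²)`, so `A`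
is hyponormal when `|s| > 1` and `A*` is hyponormal when `|s| < 1`. Applying the first part to
it, with the scalar `-s̄` resp. `-s`, shows that `(1 - |s|²) T` resp. `(1 - |s|²) T*` is
invertible.
-/

open ContinuousLinearMap ComplexConjugate

lemma isUnit_smul_one_add_of_norm_lt {𝕜 R : Type*} [NormedField 𝕜] [NormedRing R]
    [NormedAlgebra 𝕜 R] [CompleteSpace R] {k : 𝕜} {a : R} (h : ‖a‖ < ‖k‖) :
    IsUnit (k • 1 + a) := by
  have hk : k ≠ 0 := norm_pos_iff.mp ((norm_nonneg a).trans_lt h)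
  have hsmall : ‖-(k⁻¹ • a)‖ < 1 := by
    rwa [norm_neg, norm_smul, norm_inv, inv_mul_lt_iff₀ (norm_pos_iff.mpr hk), mul_one]
  have hfactor : k • 1 + a = Units.mk0 k hk • (1 - -(k⁻¹ • a)) := by
    rw [Units.smul_def, Units.val_mk0, sub_neg_eq_add, smul_add, smul_inv_smul₀ hk]
  rw [hfactor, isUnit_smul_iff]
  exact isUnit_one_sub_of_norm_lt_one hsmall

lemma isUnit_of_isUnit_smul {𝕜 R : Type*} [Field 𝕜] [Ring R] [Algebra 𝕜 R] {c : 𝕜} (hc : c ≠ 0)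
    {a : R} (h : IsUnit (c • a)) : IsUnit a :=
  (isUnit_smul_iff (Units.mk0 c hc) a).mp h

section Hyponormal

variable {H : Type*} [NormedAddCommGroup H] [InnerProductSpace ℂ H] [CompleteSpace H]

def IsHyponormal (T : H →L[ℂ] H) : Prop :=
  ∀ x, ‖adjoint T x‖ ≤ ‖T x‖

lemma isHyponormal_iff_sq {T : H →L[ℂ] H} :
    IsHyponormal T ↔ ∀ x, ‖adjoint T x‖ ^ 2 ≤ ‖T x‖ ^ 2 :=
  forall_congr' fun _ => (sq_le_sq₀ (norm_nonneg _) (norm_nonneg _)).symm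

lemma isUnit_adjoint_iff {T : H →L[ℂ] H} : IsUnit (adjoint T) ↔ IsUnit T := by
  rw [← star_eq_adjoint, isUnit_star]

lemma adjoint_smul_add_adjoint (T : H →L[ℂ] H) (s : ℂ) :
    adjoint (s • T + adjoint T) = conj s • adjoint T + T := by
  simp only [← star_eq_adjoint, star_add, star_smul, star_star, starRingEnd_apply]

lemma norm_smul_add_adjoint_apply_sq_sub (T : H →L[ℂ] H) (s : ℂ) (x : H) :
    ‖(s • T + adjoint T) x‖ ^ 2 - ‖adjoint (s • T + adjoint T) x‖ ^ 2
      = (‖s‖ ^ 2 - 1) * (‖T x‖ ^ 2 - ‖adjoint T x‖ ^ 2) := by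
  rw [adjoint_smul_add_adjoint]
  simp only [add_apply, smul_apply]
  rw [@norm_add_sq ℂ, @norm_add_sq ℂ, norm_smul, norm_smul, Complex.norm_conj,
    inner_smul_left, inner_smul_left, Complex.conj_conj, ← inner_conj_symm (adjoint T x),
    RCLike.re_to_complex, RCLike.re_to_complex]
  simp only [Complex.mul_re, Complex.conj_re, Complex.conj_im]
  ring

namespace IsHyponormal

variable {T : H →L[ℂ] H}

lemma norm_adjoint_mul_inverse_le_one (hT : IsHyponormal T) (hU : IsUnit T) :
    ‖adjoint T * Ring.inverse T‖ ≤ 1 :=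
  opNorm_le_bound _ zero_le_one fun x =>
    calc ‖adjoint T (Ring.inverse T x)‖ ≤ ‖T (Ring.inverse T x)‖ := hT _
      _ = 1 * ‖x‖ := by
        rw [← mul_apply_eq_comp, Ring.mul_inverse_cancel T hU, one_apply_eq_self, one_mul]

lemma isUnit_smul_add_adjoint (hT : IsHyponormal T) (hU : IsUnit T) {s : ℂ} (hs : ‖s‖ ≠ 1) :
    IsUnit (s • T + adjoint T) := by
  set V := adjoint T * Ring.inverse T
  have hV : ‖V‖ ≤ 1 := hT.norm_adjoint_mul_inverse_le_one hU
  rcases hs.lt_or_gt with hlt | hgt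
  · have hTV : adjoint T * adjoint V = T := by
      simp only [V, ← star_eq_adjoint, ← star_mul, mul_assoc, Ring.inverse_mul_cancel T hU,
        mul_one, star_star]
    have hfactor : s • T + adjoint T = adjoint T * ((1 : ℂ) • 1 + s • adjoint V) := by
      rw [one_smul, mul_add, mul_one, mul_smul_comm, hTV, add_comm]
    rw [hfactor]
    refine (isUnit_adjoint_iff.mpr hU).mul (isUnit_smul_one_add_of_norm_lt ?_)
    rw [norm_smul, LinearIsometryEquiv.norm_map, norm_one]
    exact (mul_le_of_le_one_right (norm_nonneg s) hV).trans_lt hlt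
  · have hfactor : s • T + adjoint T = (s • 1 + V) * T := by
      rw [add_mul, smul_one_mul, mul_assoc, Ring.inverse_mul_cancel T hU, mul_one]
    rw [hfactor]
    exact (isUnit_smul_one_add_of_norm_lt (hV.trans_lt hgt)).mul hU

lemma smul_add_adjoint (hT : IsHyponormal T) {s : ℂ} (hs : 1 ≤ ‖s‖) :
    IsHyponormal (s • T + adjoint T) := by
  refine isHyponormal_iff_sq.mpr fun x => sub_nonneg.mp ?_
  rw [norm_smul_add_adjoint_apply_sq_sub]
  exact mul_nonneg (sub_nonneg.mpr (one_le_pow₀ hs)) (sub_nonneg.mpr (isHyponormal_iff_sq.mp hT x))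

lemma adjoint_smul_add_adjoint (hT : IsHyponormal T) {s : ℂ} (hs : ‖s‖ ≤ 1) :
    IsHyponormal (adjoint (s • T + adjoint T)) := by
  refine isHyponormal_iff_sq.mpr fun x => sub_nonpos.mp ?_
  rw [adjoint_adjoint, norm_smul_add_adjoint_apply_sq_sub]
  exact mul_nonpos_of_nonpos_of_nonneg (sub_nonpos.mpr (pow_le_one₀ (norm_nonneg s) hs))
    (sub_nonneg.mpr (isHyponormal_iff_sq.mp hT x))

end IsHyponormal

end Hyponormal

/-- Proposition (Javed–Maji): Let `T` be hyponormal on a complex Hilbert space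
and `s ∈ ℂ` with `|s| ≠ 1`. Then `T` is invertible iff `s • T + T*` is invertible. -/
theorem isUnit_iff_isUnit_smul_add_adjoint
    {H : Type*} [NormedAddCommGroup H] [InnerProductSpace ℂ H] [CompleteSpace H]
    (T : H →L[ℂ] H) (hT : ∀ h : H, ‖adjoint T h‖ ≤ ‖T h‖)
    (s : ℂ) (hs : ‖s‖ ≠ 1) :
    IsUnit T ↔ IsUnit (s • T + adjoint T) := by
  have hT : IsHyponormal T := hT
  refine ⟨fun hU => hT.isUnit_smul_add_adjoint hU hs, fun hA => ?_⟩
  have hc : (1 - s * conj s : ℂ) ≠ 0 := by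
    rw [Complex.mul_conj, Complex.normSq_eq_norm_sq, sub_ne_zero, ne_comm]
    exact_mod_cast (pow_eq_one_iff_of_nonneg (norm_nonneg s) two_ne_zero).not.mpr hs
  rcases hs.lt_or_gt with hlt | hgt
  · have h := (hT.adjoint_smul_add_adjoint hlt.le).isUnit_smul_add_adjoint
      (isUnit_adjoint_iff.mpr hA) (s := -s) (by rwa [norm_neg])
    rw [adjoint_adjoint, adjoint_smul_add_adjoint,
      show -s • (conj s • adjoint T + T) + (s • T + adjoint T) = (1 - s * conj s) • adjoint T by
        module] at h
    exact isUnit_adjoint_iff.mp (isUnit_of_isUnit_smul hc h)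
  · have h := (hT.smul_add_adjoint hgt.le).isUnit_smul_add_adjoint hA (s := -conj s)
      (by rwa [norm_neg, Complex.norm_conj])
    rw [adjoint_smul_add_adjoint,
      show -conj s • (s • T + adjoint T) + (conj s • adjoint T + T) = (1 - s * conj s) • T by
        module] at h
    exact isUnit_of_isUnit_smul hc h
end

section
/- Let H be a complex Hilbert space, T a bounded linear operator on H that is hyponormal, and s ∈ ℂ with 0 < |s| < 1. If both sT + T* and (conj s)·T* + T are bounded below, then both T and T* are bounded below. -/
/-!
For `‖s‖ ≤ 1` the operator `B = s̄T* + T` inherits hyponormality from `T`, because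
`‖B* h‖² - ‖B h‖² = (1 - ‖s‖²)(‖T* h‖² - ‖T h‖²)`. Since `B` and `B* = sT + T*` are bounded
below, `B` is invertible, and hyponormality gives `‖B* B⁻¹‖ ≤ 1`. For `‖s‖ < 1` the Neumann
series then makes `B - s̄B* = (1 - s̄B* B⁻¹) B` invertible; but `B - s̄B* = (1 - ‖s‖²) T`, so `T`
and hence `T*` are invertible, in particular bounded below.
-/

open ContinuousLinearMap ComplexConjugate

section InnerProductSpace

variable {𝕜 E : Type*} [RCLike 𝕜] [NormedAddCommGroup E] [InnerProductSpace 𝕜 E]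

theorem norm_smul_add_sq_sub_norm_conj_smul_add_sq (s : 𝕜) (x y : E) :
    ‖s • x + y‖ ^ 2 - ‖conj s • y + x‖ ^ 2 = (1 - ‖s‖ ^ 2) * (‖y‖ ^ 2 - ‖x‖ ^ 2) := by
  have cross : RCLike.re (inner 𝕜 (conj s • y) x) = RCLike.re (inner 𝕜 (s • x) y) := by
    rw [inner_smul_left, inner_smul_left, RCLike.conj_conj, ← inner_conj_symm (𝕜 := 𝕜) x y,
      ← map_mul, RCLike.conj_re]
  rw [norm_add_sq (𝕜 := 𝕜), norm_add_sq (𝕜 := 𝕜), norm_smul, norm_smul, RCLike.norm_conj, cross]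
  ring

theorem norm_smul_add_le_norm_conj_smul_add {s : 𝕜} (hs : ‖s‖ ≤ 1) {x y : E} (hxy : ‖y‖ ≤ ‖x‖) :
    ‖s • x + y‖ ≤ ‖conj s • y + x‖ := by
  have hs2 : ‖s‖ ^ 2 ≤ 1 := pow_le_one₀ (norm_nonneg s) hs
  have hxy2 : ‖y‖ ^ 2 ≤ ‖x‖ ^ 2 := pow_le_pow_left₀ (norm_nonneg y) hxy 2
  refine (pow_le_pow_iff_left₀ (norm_nonneg _) (norm_nonneg _) two_ne_zero).1 ?_
  nlinarith [norm_smul_add_sq_sub_norm_conj_smul_add_sq s x y,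
    mul_nonneg (sub_nonneg.2 hs2) (sub_nonneg.2 hxy2)]

end InnerProductSpace

namespace ContinuousLinearMap

variable {𝕜 E F : Type*} [RCLike 𝕜]

section Normed

variable [NormedAddCommGroup E] [NormedSpace 𝕜 E] [NormedAddCommGroup F] [NormedSpace 𝕜 F]

def IsBoundedBelow (T : E →L[𝕜] F) : Prop :=
  ∃ c > 0, ∀ x, c * ‖x‖ ≤ ‖T x‖

theorem IsBoundedBelow.injective {T : E →L[𝕜] F} (hT : T.IsBoundedBelow) :
    Function.Injective T := by
  obtain ⟨c, hc, hT⟩ := hT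
  refine (injective_iff_map_eq_zero T).2 fun x hx => norm_le_zero_iff.1 ?_
  have := hT x
  rw [hx, norm_zero] at this
  nlinarith [norm_nonneg x]

theorem IsBoundedBelow.isClosed_range [CompleteSpace E] {T : E →L[𝕜] F}
    (hT : T.IsBoundedBelow) : IsClosed (Set.range T) := by
  obtain ⟨c, hc, hT⟩ := hT
  refine (T.antilipschitz_of_bound (K := (Real.toNNReal c)⁻¹) fun x => ?_).isClosed_range
    T.uniformContinuous
  rw [NNReal.coe_inv, Real.coe_toNNReal _ hc.le, inv_mul_eq_div, le_div_iff₀ hc, mul_comm]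
  exact hT x

theorem isBoundedBelow_of_comp_eq_id (S : F →L[𝕜] E) (T : E →L[𝕜] F)
    (h : S ∘L T = .id 𝕜 E) : T.IsBoundedBelow := by
  refine ⟨(‖S‖ + 1)⁻¹, by positivity, fun x => ?_⟩
  calc (‖S‖ + 1)⁻¹ * ‖x‖ = (‖S‖ + 1)⁻¹ * ‖S (T x)‖ := by rw [← comp_apply, h, id_apply]
    _ ≤ (‖S‖ + 1)⁻¹ * ((‖S‖ + 1) * ‖T x‖) := by
        gcongr
        exact (S.le_opNorm _).trans (by gcongr; linarith)
    _ = ‖T x‖ := by field_simp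

theorem _root_.IsUnit.isBoundedBelow {T : E →L[𝕜] E} (hT : IsUnit T) : T.IsBoundedBelow := by
  obtain ⟨u, rfl⟩ := hT
  exact isBoundedBelow_of_comp_eq_id _ _ u.inv_mul

end Normed

section InnerProduct

variable [NormedAddCommGroup E] [InnerProductSpace 𝕜 E] [CompleteSpace E]

theorem isUnit_of_isBoundedBelow_of_isBoundedBelow_adjoint {T : E →L[𝕜] E}
    (hT : T.IsBoundedBelow) (hT' : (adjoint T).IsBoundedBelow) : IsUnit T := by
  refine isUnit_iff_bijective.2 ⟨hT.injective, ?_⟩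
  have : CompleteSpace T.range := (hT.isClosed_range.completeSpace_coe :)
  rw [← coe_coe, ← LinearMap.range_eq_top, ← Submodule.orthogonal_eq_bot_iff, orthogonal_range,
    LinearMap.ker_eq_bot, coe_coe]
  exact hT'.injective

theorem adjoint_conj_smul_adjoint_add (s : 𝕜) (T : E →L[𝕜] E) :
    adjoint (conj s • adjoint T + T) = s • T + adjoint T := by
  rw [map_add, map_smulₛₗ, adjoint_adjoint, RCLike.conj_conj]

theorem conj_smul_adjoint_add_sub_smul_adjoint (s : 𝕜) (T : E →L[𝕜] E) :
    conj s • adjoint T + T - conj s • adjoint (conj s • adjoint T + T) =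
      ((1 - ‖s‖ ^ 2 : ℝ) : 𝕜) • T := by
  rw [adjoint_conj_smul_adjoint_add, smul_add, smul_smul, RCLike.conj_mul]
  push_cast
  module

def IsHyponormal (T : E →L[𝕜] E) : Prop :=
  ∀ x, ‖adjoint T x‖ ≤ ‖T x‖

theorem IsHyponormal.conj_smul_adjoint_add {T : E →L[𝕜] E} (hT : T.IsHyponormal) {s : 𝕜}
    (hs : ‖s‖ ≤ 1) : (conj s • adjoint T + T).IsHyponormal := fun x => by
  rw [adjoint_conj_smul_adjoint_add]
  exact norm_smul_add_le_norm_conj_smul_add hs (hT x)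

theorem IsHyponormal.norm_adjoint_mul_le_one {B C : E →L[𝕜] E} (hB : B.IsHyponormal)
    (hC : B * C = 1) : ‖adjoint B * C‖ ≤ 1 :=
  opNorm_le_bound _ zero_le_one fun x =>
    calc ‖adjoint B (C x)‖ ≤ ‖B (C x)‖ := hB (C x)
      _ = 1 * ‖x‖ := by rw [← mul_apply_eq_comp, hC, one_apply_eq_self, one_mul]

theorem IsHyponormal.isUnit_sub_smul_adjoint {B : E →L[𝕜] E} (hB : B.IsHyponormal)
    (hu : IsUnit B) {t : 𝕜} (ht : ‖t‖ < 1) : IsUnit (B - t • adjoint B) := by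
  obtain ⟨u, rfl⟩ := hu
  have small : ‖t • (adjoint (u : E →L[𝕜] E) * ↑u⁻¹)‖ < 1 := by
    rw [norm_smul]
    nlinarith [hB.norm_adjoint_mul_le_one u.mul_inv, norm_nonneg t,
      norm_nonneg (adjoint (u : E →L[𝕜] E) * ↑u⁻¹)]
  have factor : ↑u - t • adjoint (u : E →L[𝕜] E) =
      (1 - t • (adjoint (u : E →L[𝕜] E) * ↑u⁻¹)) * u := by
    rw [sub_mul, one_mul, smul_mul_assoc, mul_assoc, u.inv_mul, mul_one]
  rw [factor]
  exact (isUnit_one_sub_of_norm_lt_one small).mul u.isUnit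

end InnerProduct

end ContinuousLinearMap

theorem boundedBelow_of_boundedBelow_pair_of_abs_lt_one_general
    {H : Type*} [NormedAddCommGroup H] [InnerProductSpace ℂ H] [CompleteSpace H]
    (T : H →L[ℂ] H) (hT : ∀ h : H, ‖adjoint T h‖ ≤ ‖T h‖)
    (s : ℂ) (hs1 : ‖s‖ < 1)
    (h1 : ∃ c > 0, ∀ h : H, c * ‖h‖ ≤ ‖(s • T + adjoint T) h‖)
    (h2 : ∃ c > 0, ∀ h : H,
      c * ‖h‖ ≤ ‖(((starRingEnd ℂ) s) • adjoint T + T) h‖) :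
    (∃ c > 0, ∀ h : H, c * ‖h‖ ≤ ‖T h‖) ∧
      (∃ c > 0, ∀ h : H, c * ‖h‖ ≤ ‖adjoint T h‖) := by
  set B := conj s • adjoint T + T
  have hB : B.IsHyponormal := IsHyponormal.conj_smul_adjoint_add hT hs1.le
  have hBu : IsUnit B :=
    isUnit_of_isBoundedBelow_of_isBoundedBelow_adjoint h2
      (by rw [adjoint_conj_smul_adjoint_add]; exact h1)
  have hTu : IsUnit T := by
    have hne : ((1 - ‖s‖ ^ 2 : ℝ) : ℂ) ≠ 0 := by
      norm_cast
      nlinarith [norm_nonneg s]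
    have hunit := hB.isUnit_sub_smul_adjoint hBu (t := conj s) (by rwa [RCLike.norm_conj])
    rw [conj_smul_adjoint_add_sub_smul_adjoint] at hunit
    exact (isUnit_smul_iff (Units.mk0 _ hne) T).1 hunit
  exact ⟨hTu.isBoundedBelow, (star_eq_adjoint T ▸ hTu.star).isBoundedBelow⟩

/-- Let `T` be hyponormal on a complex Hilbert space and `s ∈ ℂ` with
`0 < |s| < 1`. If both `sT + T*` and `s̄T* + T` are bounded below, then both
`T` and `T*` are bounded below. -/
theorem boundedBelow_of_boundedBelow_pair_of_abs_lt_one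
    {H : Type*} [NormedAddCommGroup H] [InnerProductSpace ℂ H] [CompleteSpace H]
    (T : H →L[ℂ] H) (hT : ∀ h : H, ‖adjoint T h‖ ≤ ‖T h‖)
    (s : ℂ) (hs0 : 0 < ‖s‖) (hs1 : ‖s‖ < 1)
    (h1 : ∃ c > 0, ∀ h : H, c * ‖h‖ ≤ ‖(s • T + adjoint T) h‖)
    (h2 : ∃ c > 0, ∀ h : H,
      c * ‖h‖ ≤ ‖(((starRingEnd ℂ) s) • adjoint T + T) h‖) :
    (∃ c > 0, ∀ h : H, c * ‖h‖ ≤ ‖T h‖) ∧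
      (∃ c > 0, ∀ h : H, c * ‖h‖ ≤ ‖adjoint T h‖) :=
  boundedBelow_of_boundedBelow_pair_of_abs_lt_one_general T hT s hs1 h1 h2
end
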